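/- Let $k$ be a field, $A = k[s,t]/(st)$ graded with $|s|=1$, $|t|=-1$. Let $M$ be a nonnegatively graded $A$-module and $x_0 \in M_0 \setminus \{0\}$. Then there exists an index $(m,I)$ (with $0 \le m \le \infty$, $I \subseteq \{1,\dots,m\}$) and a pure injective graded $A$-module map $i\colon M(m,I) \to M$ with $i(x_0) = x_0$. -/

import Mathlib

open scoped Classical

namespace Paper

variable (k : Type) [Field k]

/-- A nonnegatively graded module over `A = k[s,t]/(st)`, given componentwise. -/
structure GM where
  M : ℕ → Type
  [acg : ∀ i, AddCommGroup (M i)]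
  [mod : ∀ i, Module k (M i)]
  s : ∀ i, M i →ₗ[k] M (i + 1)
  t : ∀ i, M (i + 1) →ₗ[k] M i
  ts : ∀ i x, t i (s i x) = 0
  st : ∀ i x, s i (t i x) = 0

attribute [instance] GM.acg GM.mod

variable {k}

/-- Morphisms of graded `A`-modules. -/
structure Hom (M N : GM k) where
  f : ∀ i, M.M i →ₗ[k] N.M i
  comm_s : ∀ i x, f (i + 1) (M.s i x) = N.s i (f i x)
  comm_t : ∀ i x, f i (M.t i x) = N.t i (f (i + 1) x)

/-- Isomorphism of graded `A`-modules. -/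
def GMIso (M N : GM k) : Prop := ∃ f : Hom M N, ∀ i, Function.Bijective (f.f i)

/-- A morphism is (componentwise) injective. -/
def InjHom {M N : GM k} (f : Hom M N) : Prop := ∀ i, Function.Injective (f.f i)

/-- Purity of (the image of) a morphism, via the concrete characterization
`sN_i ⊓ P_{i+1} = sP_i` and `tN_{i+1} ⊓ P_i = tP_{i+1}`. -/
def IsPure {M N : GM k} (f : Hom M N) : Prop :=
  ∀ i,
    LinearMap.range (N.s i) ⊓ LinearMap.range (f.f (i + 1)) =
      LinearMap.range ((N.s i).comp (f.f i)) ∧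
    LinearMap.range (N.t i) ⊓ LinearMap.range (f.f i) =
      LinearMap.range ((N.t i).comp (f.f (i + 1)))

/-- Index `(m, I)` of a string module: `0 ≤ m ≤ ∞` and `I ⊆ {1, …, m}`. -/
structure StringIndex where
  m : ℕ∞
  I : Set ℕ
  hI : ∀ i ∈ I, 1 ≤ i ∧ (i : ℕ∞) ≤ m

variable (k)

/-- Degree-`i` component of the `n`-fold suspension of the string module `M(m,I)`:
a copy of `k` if `n ≤ i ≤ n + m`, and `0` otherwise. -/
def SC (n : ℕ) (σ : StringIndex) (i : ℕ) : Submodule k k :=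
  if n ≤ i ∧ (i : ℕ∞) ≤ (n : ℕ∞) + σ.m then ⊤ else ⊥

lemma SC_top (n : ℕ) (σ : StringIndex) (i : ℕ) (h1 : n ≤ i)
    (h2 : (i : ℕ∞) ≤ (n : ℕ∞) + σ.m) : SC k n σ i = ⊤ := by
  simp [SC, h1, h2]

/-- The `s`-multiplication on the suspended string module. -/
noncomputable def smap (n : ℕ) (σ : StringIndex) (i : ℕ) :
    SC k n σ i →ₗ[k] SC k n σ (i + 1) :=
  if h : ((i + 1 : ℕ) : ℕ∞) ≤ (n : ℕ∞) + σ.m ∧ (i + 1 - n) ∈ σ.I then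
    Submodule.inclusion (by
      have h1 : 1 ≤ i + 1 - n := (σ.hI _ h.2).1
      have hn : n ≤ i + 1 := by omega
      rw [SC_top k n σ (i + 1) hn h.1]
      exact le_top)
  else 0

/-- The `t`-multiplication on the suspended string module. -/
noncomputable def tmap (n : ℕ) (σ : StringIndex) (i : ℕ) :
    SC k n σ (i + 1) →ₗ[k] SC k n σ i :=
  if h : n ≤ i ∧ (i + 1 - n) ∉ σ.I then
    Submodule.inclusion (by
      by_cases hc : n ≤ i + 1 ∧ ((i + 1 : ℕ) : ℕ∞) ≤ (n : ℕ∞) + σ.m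
      · have hi : (i : ℕ∞) ≤ (n : ℕ∞) + σ.m :=
          le_trans (by exact_mod_cast Nat.le_succ i) hc.2
        rw [SC_top k n σ i h.1 hi]
        exact le_top
      · have hcc : ¬(((i + 1 : ℕ) : ℕ∞) ≤ (n : ℕ∞) + σ.m) :=
          fun hh => hc ⟨by omega, hh⟩
        have : SC k n σ (i + 1) = ⊥ := by
          rw [SC, if_neg (fun hh => hcc hh.2)]
        rw [this]; exact bot_le)
  else 0

/-- The `n`-fold suspension `Σⁿ M(m, I)` of the string module `M(m, I)`. -/
noncomputable def SM (n : ℕ) (σ : StringIndex) : GM k where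
  M i := SC k n σ i
  s i := smap k n σ i
  t i := tmap k n σ i
  ts i x := by
    by_cases h : ((i + 1 : ℕ) : ℕ∞) ≤ (n : ℕ∞) + σ.m ∧ (i + 1 - n) ∈ σ.I
    · have h' : ¬(n ≤ i ∧ (i + 1 - n) ∉ σ.I) := fun hc => hc.2 h.2
      simp only [tmap, dif_neg h', LinearMap.zero_apply]
    · simp only [smap, dif_neg h, LinearMap.zero_apply, map_zero]
  st i x := by
    by_cases h : n ≤ i ∧ (i + 1 - n) ∉ σ.I
    · have h' : ¬(((i + 1 : ℕ) : ℕ∞) ≤ (n : ℕ∞) + σ.m ∧ (i + 1 - n) ∈ σ.I) :=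
        fun hc => h.2 hc.2
      simp only [smap, dif_neg h', LinearMap.zero_apply]
    · simp only [tmap, dif_neg h, LinearMap.zero_apply, map_zero]

/-- The defining generator `x_i` of the (suspended) string module. -/
def xg (n : ℕ) (σ : StringIndex) (i : ℕ) (h1 : n ≤ i)
    (h2 : (i : ℕ∞) ≤ (n : ℕ∞) + σ.m) : SC k n σ i :=
  ⟨1, by rw [SC_top k n σ i h1 h2]; trivial⟩

variable {k}

/-- A graded module is nontrivial. -/
def Nontriv (M : GM k) : Prop := ∃ i, ∃ x : M.M i, x ≠ 0

/-- Binary direct sum of graded `A`-modules. -/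
def dsum (M N : GM k) : GM k where
  M i := M.M i × N.M i
  s i := (M.s i).prodMap (N.s i)
  t i := (M.t i).prodMap (N.t i)
  ts i x := by cases x with | mk a b => simp [M.ts, N.ts, Prod.ext_iff]
  st i x := by cases x with | mk a b => simp [M.st, N.st, Prod.ext_iff]

/-- Indecomposability of a graded `A`-module. -/
def Indec (M : GM k) : Prop :=
  Nontriv M ∧ ∀ N P : GM k, GMIso M (dsum N P) → ¬(Nontriv N ∧ Nontriv P)

/-- Direct sum of a family of graded `A`-modules. -/
noncomputable def gdsum {ι : Type} (F : ι → GM k) : GM k where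
  M i := Π₀ j : ι, (F j).M i
  s i := DFinsupp.mapRange.linearMap (fun j => (F j).s i)
  t i := DFinsupp.mapRange.linearMap (fun j => (F j).t i)
  ts i x := by
    ext j
    simp [(F j).ts]
  st i x := by
    ext j
    simp [(F j).st]

/-- The (lexicographic-type) well-order on string indices: `t` before `s`. -/
def idxLE (σ τ : StringIndex) : Prop :=
  (σ.m ≤ τ.m ∧ τ.I ∩ {j | (j : ℕ∞) ≤ σ.m} = σ.I) ∨
  (∃ i ∈ τ.I, i ∉ σ.I ∧ σ.I ∩ {j | j < i} = τ.I ∩ {j | j < i})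

end Paper

namespace Paper


section Construction

variable {k : Type} [Field k] (M : GM k) (x0 : M.M 0)

/-- The iteratively constructed sequence of generators. -/
noncomputable def xseq : ∀ i : ℕ, M.M i
  | 0 => x0
  | (i+1) =>
      if M.s i (xseq i) ≠ 0 then M.s i (xseq i)
      else if h : xseq i ≠ 0 ∧ ∃ y, M.t i y = xseq i then h.2.choose
      else 0

@[simp] lemma xseq_zero : xseq M x0 0 = x0 := rfl

lemma xseq_cases (i : ℕ) :
    (M.s i (xseq M x0 i) ≠ 0 ∧ xseq M x0 (i+1) = M.s i (xseq M x0 i)) ∨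
    (M.s i (xseq M x0 i) = 0 ∧ xseq M x0 i ≠ 0 ∧
      M.t i (xseq M x0 (i+1)) = xseq M x0 i) ∨
    (M.s i (xseq M x0 i) = 0 ∧ xseq M x0 (i+1) = 0 ∧
      (xseq M x0 i = 0 ∨ ¬ ∃ y, M.t i y = xseq M x0 i)) := by
  by_cases hs : M.s i (xseq M x0 i) ≠ 0
  · left
    exact ⟨hs, by rw [xseq, if_pos hs]⟩
  · push_neg at hs
    by_cases h : xseq M x0 i ≠ 0 ∧ ∃ y, M.t i y = xseq M x0 i
    · right; left
      refine ⟨hs, h.1, ?_⟩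
      have he : xseq M x0 (i+1) = h.2.choose := by
        rw [xseq, if_neg (fun hn => hn hs), dif_pos h]
      rw [he]
      exact h.2.choose_spec
    · right; right
      refine ⟨hs, ?_, ?_⟩
      · rw [xseq, if_neg (fun hn => hn hs), dif_neg h]
      · by_cases hx : xseq M x0 i = 0
        · exact Or.inl hx
        · exact Or.inr fun hy => h ⟨hx, hy⟩

lemma xseq_succ_of_s {i : ℕ} (hs : M.s i (xseq M x0 i) ≠ 0) :
    xseq M x0 (i+1) = M.s i (xseq M x0 i) := by
  rw [xseq, if_pos hs]

lemma xseq_zero_succ {i : ℕ} (h : xseq M x0 i = 0) : xseq M x0 (i+1) = 0 := by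
  rcases xseq_cases M x0 i with ⟨hs, _⟩ | ⟨_, hne, _⟩ | ⟨_, hz, _⟩
  · exact absurd (by rw [h, map_zero]) hs
  · exact absurd h hne
  · exact hz

lemma xseq_zero_mono {i j : ℕ} (hij : i ≤ j) (h : xseq M x0 i = 0) :
    xseq M x0 j = 0 := by
  induction hij with
  | refl => exact h
  | step _ ih => exact xseq_zero_succ M x0 ih

/-- The string index produced by the construction. -/
noncomputable def sigmaIdx : StringIndex where
  m := sSup {n : ℕ∞ | ∃ j : ℕ, (j : ℕ∞) = n ∧ xseq M x0 j ≠ 0}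
  I := {i | ∃ j : ℕ, i = j + 1 ∧ M.s j (xseq M x0 j) ≠ 0}
  hI := by
    rintro i ⟨j, rfl, hj⟩
    refine ⟨by omega, le_sSup ⟨j + 1, rfl, ?_⟩⟩
    rw [xseq_succ_of_s M x0 hj]
    exact hj

lemma mem_I_iff (i : ℕ) :
    (i + 1) ∈ (sigmaIdx M x0).I ↔ M.s i (xseq M x0 i) ≠ 0 := by
  constructor
  · rintro ⟨j, hj, hs⟩
    obtain rfl : j = i := by omega
    exact hs
  · intro h
    exact ⟨i, rfl, h⟩

lemma le_m_of_ne {i : ℕ} (h : xseq M x0 i ≠ 0) :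
    (i : ℕ∞) ≤ (sigmaIdx M x0).m :=
  le_sSup ⟨i, rfl, h⟩

lemma xseq_eq_zero_of_not_le {i : ℕ} (h : ¬ (i : ℕ∞) ≤ (sigmaIdx M x0).m) :
    xseq M x0 i = 0 := by
  by_contra hz
  exact h (le_m_of_ne M x0 hz)

lemma le_m_iff (hx0 : x0 ≠ 0) (i : ℕ) :
    (i : ℕ∞) ≤ (sigmaIdx M x0).m ↔ xseq M x0 i ≠ 0 := by
  refine ⟨fun hle => ?_, le_m_of_ne M x0⟩
  by_contra hz
  have hi : i ≠ 0 := by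
    rintro rfl
    exact hx0 hz
  have hub : (sigmaIdx M x0).m ≤ ((i - 1 : ℕ) : ℕ∞) := by
    apply sSup_le
    rintro n ⟨j, rfl, hj⟩
    have hji : j < i := by
      by_contra hc
      push_neg at hc
      exact hj (xseq_zero_mono M x0 hc hz)
    exact Nat.cast_le.mpr (by omega)
  have h2 : (i : ℕ∞) ≤ ((i - 1 : ℕ) : ℕ∞) := le_trans hle hub
  have h3 : i ≤ i - 1 := Nat.cast_le.mp h2
  omega

lemma SC_zero_eq (σ : StringIndex) (i : ℕ) :
    SC k 0 σ i = if (i : ℕ∞) ≤ σ.m then (⊤ : Submodule k k) else ⊥ := by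
  simp only [SC, Nat.zero_le, true_and, Nat.cast_zero, zero_add]

lemma mem_SC_le {σ : StringIndex} {i : ℕ} {c : k} (hc : c ∈ SC k 0 σ i)
    (h : c ≠ 0) : (i : ℕ∞) ≤ σ.m := by
  by_contra hle
  rw [SC_zero_eq, if_neg hle] at hc
  exact h hc

/-- The component maps of the desired morphism. -/
noncomputable def ffmap (i : ℕ) : (SC k 0 (sigmaIdx M x0) i) →ₗ[k] M.M i :=
  (LinearMap.toSpanSingleton k (M.M i) (xseq M x0 i)).comp
    (Submodule.subtype _)

lemma ffmap_apply (i : ℕ) (z : SC k 0 (sigmaIdx M x0) i) :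
    ffmap M x0 i z = (z : k) • xseq M x0 i := rfl

/-- The morphism from the string module to `M`. -/
noncomputable def fhom (hx0 : x0 ≠ 0) : Hom (SM k 0 (sigmaIdx M x0)) M where
  f i := ffmap M x0 i
  comm_s i z := by
    obtain ⟨c, hc⟩ := z
    show ffmap M x0 (i+1) (smap k 0 (sigmaIdx M x0) i ⟨c, hc⟩)
        = M.s i (ffmap M x0 i ⟨c, hc⟩)
    simp only [ffmap_apply, map_smul]
    rw [smap]
    by_cases h : ((i + 1 : ℕ) : ℕ∞) ≤ ((0 : ℕ) : ℕ∞) + (sigmaIdx M x0).m ∧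
        (i + 1 - 0) ∈ (sigmaIdx M x0).I
    · rw [dif_pos h]
      have hs : M.s i (xseq M x0 i) ≠ 0 := (mem_I_iff M x0 i).mp h.2
      rw [Submodule.coe_inclusion, xseq_succ_of_s M x0 hs]
    · rw [dif_neg h]
      simp only [LinearMap.zero_apply, ZeroMemClass.coe_zero, zero_smul]
      have hs : M.s i (xseq M x0 i) = 0 := by
        by_contra hs
        refine h ⟨?_, (mem_I_iff M x0 i).mpr hs⟩
        rw [Nat.cast_zero, zero_add]
        refine le_m_of_ne M x0 ?_
        rw [xseq_succ_of_s M x0 hs]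
        exact hs
      rw [hs, smul_zero]
  comm_t i z := by
    obtain ⟨c, hc⟩ := z
    show ffmap M x0 i (tmap k 0 (sigmaIdx M x0) i ⟨c, hc⟩)
        = M.t i (ffmap M x0 (i+1) ⟨c, hc⟩)
    simp only [ffmap_apply, map_smul]
    rw [tmap]
    by_cases h : 0 ≤ i ∧ (i + 1 - 0) ∉ (sigmaIdx M x0).I
    · rw [dif_pos h, Submodule.coe_inclusion]
      have hs : M.s i (xseq M x0 i) = 0 := by
        by_contra hs
        exact h.2 ((mem_I_iff M x0 i).mpr hs)
      rcases xseq_cases M x0 i with ⟨hs', _⟩ | ⟨_, _, ht⟩ | ⟨_, hz, hrest⟩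
      · exact absurd hs hs'
      · rw [ht]
      · rw [hz, map_zero, smul_zero]
        rcases hrest with hx | _
        · rw [hx, smul_zero]
        · -- `xseq (i+1) = 0` while `xseq i ≠ 0` is impossible unless `c = 0`
          have hc0 : c = 0 := by
            by_contra hc0
            have hle := mem_SC_le hc hc0
            rw [le_m_iff M x0 hx0] at hle
            exact hle hz
          show c • xseq M x0 i = 0
          rw [hc0, zero_smul]
    · rw [dif_neg h]
      simp only [LinearMap.zero_apply, ZeroMemClass.coe_zero, zero_smul]
      have hs : M.s i (xseq M x0 i) ≠ 0 := by
        by_contra hs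
        exact h ⟨Nat.zero_le i, fun hI => (mem_I_iff M x0 i).mp hI hs⟩
      rw [xseq_succ_of_s M x0 hs, M.ts, smul_zero]

lemma range_ffmap (i : ℕ) :
    LinearMap.range (ffmap M x0 i) = Submodule.span k {xseq M x0 i} := by
  rw [ffmap, LinearMap.range_comp, Submodule.range_subtype]
  by_cases h : (i : ℕ∞) ≤ (sigmaIdx M x0).m
  · rw [SC_zero_eq, if_pos h, Submodule.map_top, LinearMap.span_singleton_eq_range]
  · rw [SC_zero_eq, if_neg h, Submodule.map_bot, xseq_eq_zero_of_not_le M x0 h,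
      Submodule.span_zero_singleton]

end Construction

/-- for any nonzero `x₀ ∈ M₀` there is a pure injection of some
string module `M(m,I)` into `M` sending `x₀` to `x₀`. -/
theorem exists_pure_string_submodule
    (k : Type) [Field k] (M : GM k) (x0 : M.M 0) (hx0 : x0 ≠ 0) :
    ∃ (σ : StringIndex) (f : Hom (SM k 0 σ) M),
      InjHom f ∧ IsPure f ∧
        f.f 0 (xg k 0 σ 0 le_rfl (by simp)) = x0 := by
  refine ⟨sigmaIdx M x0, fhom M x0 hx0, ?_, ?_, ?_⟩
  · -- injectivity
    intro i
    show Function.Injective (ffmap M x0 i)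
    refine (injective_iff_map_eq_zero _).mpr ?_
    rintro ⟨c, hcm⟩ hc
    rw [ffmap_apply] at hc
    rw [Submodule.mk_eq_zero]
    by_contra hc0
    have hle := mem_SC_le hcm hc0
    rw [le_m_iff M x0 hx0] at hle
    rcases smul_eq_zero.mp hc with h | h
    · exact hc0 h
    · exact hle h
  · -- purity
    intro i
    constructor
    · show LinearMap.range (M.s i) ⊓ LinearMap.range (ffmap M x0 (i+1)) =
        LinearMap.range ((M.s i).comp (ffmap M x0 i))
      rw [range_ffmap, LinearMap.range_comp, range_ffmap, Submodule.map_span,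
        Set.image_singleton]
      apply le_antisymm
      · intro y hmem
        rw [Submodule.mem_inf] at hmem
        obtain ⟨h1, h2⟩ := hmem
        obtain ⟨z, hz⟩ := h1
        rw [Submodule.mem_span_singleton] at h2
        obtain ⟨c, rfl⟩ := h2
        rw [Submodule.mem_span_singleton]
        rcases xseq_cases M x0 i with ⟨hs, he⟩ | ⟨hs, hne, ht⟩ | ⟨hs, hz1, _⟩
        · exact ⟨c, by rw [he]⟩
        · have h0 : c • xseq M x0 i = 0 := by
            have h3 : M.t i (M.s i z) = 0 := M.ts i z
            rw [hz, map_smul, ht] at h3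
            exact h3
          rcases smul_eq_zero.mp h0 with hc0 | hx
          · exact ⟨0, by rw [hc0, zero_smul, zero_smul]⟩
          · exact absurd hx hne
        · exact ⟨0, by rw [zero_smul, hz1, smul_zero]⟩
      · rw [Submodule.span_le, Set.singleton_subset_iff, SetLike.mem_coe,
          Submodule.mem_inf]
        refine ⟨⟨xseq M x0 i, rfl⟩, ?_⟩
        rw [Submodule.mem_span_singleton]
        rcases xseq_cases M x0 i with ⟨hs, he⟩ | ⟨hs, _, _⟩ | ⟨hs, _, _⟩
        · exact ⟨1, by rw [one_smul, he]⟩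
        · exact ⟨0, by rw [zero_smul, hs]⟩
        · exact ⟨0, by rw [zero_smul, hs]⟩
    · show LinearMap.range (M.t i) ⊓ LinearMap.range (ffmap M x0 i) =
        LinearMap.range ((M.t i).comp (ffmap M x0 (i+1)))
      rw [range_ffmap, LinearMap.range_comp, range_ffmap, Submodule.map_span,
        Set.image_singleton]
      apply le_antisymm
      · intro y hmem
        rw [Submodule.mem_inf] at hmem
        obtain ⟨h1, h2⟩ := hmem
        obtain ⟨z, hz⟩ := h1
        rw [Submodule.mem_span_singleton] at h2
        obtain ⟨c, rfl⟩ := h2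
        rw [Submodule.mem_span_singleton]
        rcases xseq_cases M x0 i with ⟨hs, he⟩ | ⟨hs, hne, ht⟩ | ⟨hs, hz1, hrest⟩
        · have h0 : c • M.s i (xseq M x0 i) = 0 := by
            have h3 : M.s i (M.t i z) = 0 := M.st i z
            rw [hz, map_smul] at h3
            exact h3
          rcases smul_eq_zero.mp h0 with hc0 | hx
          · exact ⟨0, by rw [hc0, zero_smul, zero_smul]⟩
          · exact absurd hx hs
        · exact ⟨c, by rw [ht]⟩
        · rcases hrest with hx | hnp
          · exact ⟨0, by rw [hx, smul_zero, zero_smul]⟩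
          · by_cases hc0 : c = 0
            · exact ⟨0, by rw [hc0, zero_smul, zero_smul]⟩
            · exfalso
              apply hnp
              refine ⟨c⁻¹ • z, ?_⟩
              rw [map_smul, hz, smul_smul, inv_mul_cancel₀ hc0, one_smul]
      · rw [Submodule.span_le, Set.singleton_subset_iff, SetLike.mem_coe,
          Submodule.mem_inf]
        refine ⟨⟨xseq M x0 (i+1), rfl⟩, ?_⟩
        rw [Submodule.mem_span_singleton]
        rcases xseq_cases M x0 i with ⟨hs, he⟩ | ⟨_, _, ht⟩ | ⟨_, hz1, _⟩
        · exact ⟨0, by rw [zero_smul, he, M.ts]⟩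
        · exact ⟨1, by rw [one_smul, ht]⟩
        · exact ⟨0, by rw [zero_smul, hz1, map_zero]⟩
  · show ffmap M x0 0 (xg k 0 (sigmaIdx M x0) 0 le_rfl (by simp)) = x0
    rw [ffmap_apply]
    show (1 : k) • x0 = x0
    rw [one_smul]

end Paper
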